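/- arXiv:1910.05661 — 4 statements merged into one kernel-verified Lean document; each statement's English description precedes it below -/
import Mathlib

section
/- Suppose that A, B, C form a 3-phase length 2m periodic Golay sequence triad, where m is a positive integer with m ≡ 2 (mod 3). Then exactly two of the following three equations hold: ∏_{i=0}^{m−1} A(2i) = ∏_{i=0}^{m−1} A(2i+1); ∏_{i=0}^{m−1} B(2i) = ∏_{i=0}^{m−1} B(2i+1); ∏_{i=0}^{m−1} C(2i) = ∏_{i=0}^{m−1} C(2i+1). -/
open scoped BigOperators

/-- `ω = e^{2πi/3}`, a primitive cube root of unity. -/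
noncomputable def ω : ℂ := Complex.exp (2 * Real.pi * Complex.I / 3)

/-- A length-`s` sequence: a function `ℤ → ℂ` vanishing outside `{0, …, s-1}`. -/
def IsLenSeq (s : ℕ) (A : ℤ → ℂ) : Prop :=
  ∀ i : ℤ, i < 0 ∨ (s : ℤ) ≤ i → A i = 0

/-- A 3-phase length-`s` sequence: a length-`s` sequence whose entries on
`{0, …, s-1}` lie in `{1, ω, ω²}`. -/
def IsThreePhaseSeq (s : ℕ) (A : ℤ → ℂ) : Prop :=
  IsLenSeq s A ∧ ∀ i : ℤ, 0 ≤ i → i < (s : ℤ) → A i ∈ ({1, ω, ω ^ 2} : Set ℂ)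

/-- Aperiodic autocorrelation function `C_A(u) = Σ_{i ∈ ℤ} A(i) conj(A(i+u))`. -/
noncomputable def aperCorr (A : ℤ → ℂ) (u : ℤ) : ℂ :=
  ∑' i : ℤ, A i * (starRingEnd ℂ) (A (i + u))

/-- Three 3-phase length-`s` sequences forming a 3-phase Golay sequence triad. -/
def GolaySeqTriad (s : ℕ) (A B C : ℤ → ℂ) : Prop :=
  IsThreePhaseSeq s A ∧ IsThreePhaseSeq s B ∧ IsThreePhaseSeq s C ∧
    ∀ u : ℤ, u ≠ 0 → aperCorr A u + aperCorr B u + aperCorr C u = 0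

/-- Periodic autocorrelation function
`R_A(u) = Σ_{i=0}^{s−1} A(i) conj(A((i+u) mod s))`. -/
noncomputable def perCorr (s : ℕ) (A : ℤ → ℂ) (u : ℤ) : ℂ :=
  ∑ i ∈ Finset.range s, A i * (starRingEnd ℂ) (A (((i : ℤ) + u) % (s : ℤ)))

/-- Three 3-phase length-`s` sequences forming a 3-phase periodic Golay sequence
triad. -/
def PeriodicGolaySeqTriad (s : ℕ) (A B C : ℤ → ℂ) : Prop :=
  IsThreePhaseSeq s A ∧ IsThreePhaseSeq s B ∧ IsThreePhaseSeq s C ∧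
    ∀ u : ℤ, 0 < u → u < (s : ℤ) →
      perCorr s A u + perCorr s B u + perCorr s C u = 0

/-!
Evaluate each sequence at `-1`: for `S_X = ∑ (-1)^i X(i)`, the alternating sum of the periodic
autocorrelations of `X` is `|S_X|²`, so the triad condition gives
`|S_A|² + |S_B|² + |S_C|² = 3 · 2m`. Writing `X(i) = ω^(a i)`, the signs `(-1)^i` sum to zero, so
`S_X` is divisible by `ω - 1` in `ℤ[ω]`, an element of norm `3`. Hence `|S_X|² = 3 t_X` with
`t_X ≡ d_X² (mod 3)` for `d_X = ∑ (-1)^i a i`, and `d_X = 0` exactly when the even and odd products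
of `X` agree. Reducing `t_A + t_B + t_C = 2m` modulo `3` gives `d_A² + d_B² + d_C² = 1` in `ZMod 3`,
so exactly one `d_X` is nonzero.
-/

open Finset ComplexConjugate

lemma isPrimitiveRoot_ω : IsPrimitiveRoot ω 3 := by
  simpa [ω] using Complex.isPrimitiveRoot_exp 3 (by norm_num)

lemma ω_pow_three : ω ^ 3 = 1 := isPrimitiveRoot_ω.pow_eq_one

lemma one_add_ω_add_ω_sq : 1 + ω + ω ^ 2 = 0 := by
  simpa [sum_range_succ] using isPrimitiveRoot_ω.geom_sum_eq_zero (by norm_num)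

lemma conj_ω : conj ω = ω ^ 2 := by
  have hnorm : ‖ω‖ = 1 := Complex.norm_eq_one_of_pow_eq_one ω_pow_three (by norm_num)
  rw [← Complex.inv_eq_conj hnorm, inv_eq_of_mul_eq_one_right (by rw [← pow_succ', ω_pow_three])]

lemma ω_pow_eq_ω_pow_iff (p q : ℕ) : ω ^ p = ω ^ q ↔ (p : ZMod 3) = q := by
  rw [(isPrimitiveRoot_ω.isOfFinOrder (by norm_num)).pow_eq_pow_iff_modEq,
    ← isPrimitiveRoot_ω.eq_orderOf, ZMod.natCast_eq_natCast_iff]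

lemma sum_range_add_mod {M : Type*} [AddCommMonoid M] {s i : ℕ} (hi : i < s) (f : ℕ → M) :
    ∑ u ∈ range s, f ((i + u) % s) = ∑ u ∈ range s, f u := by
  have : NeZero s := ⟨by omega⟩
  simp only [← Fin.sum_univ_eq_sum_range]
  simpa [Fin.val_add] using Equiv.sum_comp (Equiv.addLeft (⟨i, hi⟩ : Fin s)) (fun j => f j)

lemma sum_range_two_mul {M : Type*} [AddCommMonoid M] (n : ℕ) (f : ℕ → M) :
    ∑ i ∈ range (2 * n), f i = ∑ i ∈ range n, f (2 * i) + ∑ i ∈ range n, f (2 * i + 1) := by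
  induction n with
  | zero => simp
  | succ n ih =>
    rw [show 2 * (n + 1) = 2 * n + 1 + 1 by ring, sum_range_succ, sum_range_succ, ih,
      sum_range_succ, sum_range_succ]
    abel

noncomputable def seqEval (s : ℕ) (A : ℤ → ℂ) (z : ℂ) : ℂ :=
  ∑ i ∈ range s, A i * z ^ i

theorem sum_pow_mul_perCorr {s : ℕ} {ζ : ℂ} (hζ : ζ ^ s = 1) (A : ℤ → ℂ) :
    ∑ u ∈ range s, ζ ^ u * perCorr s A u = seqEval s A (conj ζ) * conj (seqEval s A (conj ζ)) := by
  rcases s.eq_zero_or_pos with rfl | hs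
  · simp [seqEval]
  have hunit : conj ζ * ζ = 1 := by
    rw [Complex.conj_mul', Complex.norm_eq_one_of_pow_eq_one hζ hs.ne']
    norm_num
  have hshift : ∀ i u, ζ ^ u = conj ζ ^ i * ζ ^ ((i + u) % s) := by
    intro i u
    rw [← pow_eq_pow_mod _ hζ, pow_add, ← mul_assoc, ← mul_pow, hunit, one_pow, one_mul]
  rw [seqEval, map_sum, sum_mul_sum]
  simp only [perCorr, mul_sum, map_mul, map_pow, Complex.conj_conj]
  rw [sum_comm]
  refine sum_congr rfl fun i hi => ?_
  refine Eq.trans ?_ (sum_range_add_mod (mem_range.1 hi)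
    fun j => A i * conj ζ ^ i * (conj (A j) * ζ ^ j))
  refine sum_congr rfl fun u _ => ?_
  rw [hshift i u]
  push_cast
  ring

theorem exists_mul_conj_sum_ω_pow_eq_three_mul {ι : Type*} (s : Finset ι) (ε : ι → ℤ)
    (a : ι → ZMod 3) (hε : ∑ i ∈ s, ε i = 0) :
    ∃ t : ℤ, (∑ i ∈ s, ε i * ω ^ (a i).val) * conj (∑ i ∈ s, ε i * ω ^ (a i).val) = 3 * t ∧
      (t : ZMod 3) = (∑ i ∈ s, ε i * a i) ^ 2 := by
  let x : ZMod 3 → ℕ := fun k => min k.val 1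
  let y : ZMod 3 → ℕ := fun k => k.val / 2
  have hval : ∀ k : ZMod 3, x k + y k = k.val := fun k => by
    have := k.val_lt; simp only [x, y]; omega
  have hfactor : ∀ k : ZMod 3, ω ^ k.val - 1 = (ω - 1) * (x k + y k * ω) := fun k => by
    have := k.val_lt
    simp only [x, y]
    interval_cases k.val <;> simp; ring
  set X : ℤ := ∑ i ∈ s, ε i * x (a i)
  set Y : ℤ := ∑ i ∈ s, ε i * y (a i)
  have hS : ∑ i ∈ s, ε i * ω ^ (a i).val = (ω - 1) * (X + Y * ω) := by
    calc ∑ i ∈ s, ε i * ω ^ (a i).val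
        = ∑ i ∈ s, ε i * (ω ^ (a i).val - 1) := by
          simp only [mul_sub, mul_one, sum_sub_distrib, ← Int.cast_sum, hε, Int.cast_zero, sub_zero]
      _ = (ω - 1) * (X + Y * ω) := by
          simp only [hfactor, X, Y, Int.cast_sum, Int.cast_mul, Int.cast_natCast, mul_add, sum_mul,
            mul_sum, ← sum_add_distrib]
          exact sum_congr rfl fun i _ => by ring
  refine ⟨X ^ 2 - X * Y + Y ^ 2, ?_, ?_⟩
  · rw [hS]
    simp only [map_mul, map_sub, map_add, map_one, map_intCast, conj_ω]
    push_cast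
    linear_combination ((X + Y * ω) * (X + Y * ω ^ 2)) * (ω_pow_three - one_add_ω_add_ω_sq)
      + 3 * (X * Y * one_add_ω_add_ω_sq + Y ^ 2 * ω_pow_three)
  · have h3 : (3 : ZMod 3) = 0 := rfl
    have hsum : ((X + Y : ℤ) : ZMod 3) = ∑ i ∈ s, ε i * a i := by
      simp only [X, Y, ← sum_add_distrib, ← mul_add]
      push_cast
      simp only [← Nat.cast_add, hval, ZMod.natCast_val, ZMod.cast_id', id]
    rw [← hsum, show X ^ 2 - X * Y + Y ^ 2 = (X + Y) ^ 2 - 3 * (X * Y) by ring]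
    push_cast
    rw [h3, zero_mul, sub_zero]

lemma prod_ω_pow_even_eq_prod_odd_iff (m : ℕ) (a : ℕ → ZMod 3) :
    ∏ i ∈ range m, ω ^ (a (2 * i)).val = ∏ i ∈ range m, ω ^ (a (2 * i + 1)).val ↔
      ∑ i ∈ range (2 * m), (-1) ^ i * a i = 0 := by
  have halt : ∑ i ∈ range (2 * m), (-1) ^ i * a i =
      ∑ i ∈ range m, a (2 * i) - ∑ i ∈ range m, a (2 * i + 1) := by
    simp [sum_range_two_mul, pow_mul, pow_succ, sub_eq_add_neg]
  rw [halt, sub_eq_zero, prod_pow_eq_pow_sum, prod_pow_eq_pow_sum, ω_pow_eq_ω_pow_iff]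
  simp only [Nat.cast_sum, ZMod.natCast_val, ZMod.cast_id', id]

namespace IsThreePhaseSeq

variable {s : ℕ} {X : ℤ → ℂ}

lemma exists_eq_ω_pow (hX : IsThreePhaseSeq s X) :
    ∃ a : ℕ → ZMod 3, ∀ i < s, X i = ω ^ (a i).val := by
  have : ∀ i : ℕ, ∃ k : ZMod 3, i < s → X i = ω ^ k.val := fun i => by
    by_cases hi : i < s
    · rcases hX.2 i (by positivity) (by exact_mod_cast hi) with h | h | h
      exacts [⟨0, fun _ => by simp [h]⟩, ⟨1, fun _ => by rw [h, ZMod.val_one, pow_one]⟩,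
        ⟨2, fun _ => h⟩]
    · exact ⟨0, fun h => absurd h hi⟩
  choose a ha using this
  exact ⟨a, ha⟩

lemma perCorr_zero (hX : IsThreePhaseSeq s X) : perCorr s X 0 = s := by
  obtain ⟨a, ha⟩ := hX.exists_eq_ω_pow
  calc perCorr s X 0 = ∑ _i ∈ range s, (1 : ℂ) := by
        refine sum_congr rfl fun i hi => ?_
        have hi := mem_range.1 hi
        rw [add_zero, Int.emod_eq_of_lt (by positivity) (by exact_mod_cast hi), ha i hi, map_pow,
          conj_ω, ← mul_pow, ← pow_succ', ω_pow_three, one_pow]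
    _ = s := by simp

lemma exists_seqEval_neg_one_mul_conj {m : ℕ} (hX : IsThreePhaseSeq (2 * m) X) :
    ∃ d : ZMod 3, (∏ i ∈ range m, X (2 * (i : ℤ)) = ∏ i ∈ range m, X (2 * (i : ℤ) + 1) ↔ d = 0) ∧
      ∃ t : ℤ, seqEval (2 * m) X (-1) * conj (seqEval (2 * m) X (-1)) = 3 * t ∧
        (t : ZMod 3) = d ^ 2 := by
  obtain ⟨a, ha⟩ := hX.exists_eq_ω_pow
  refine ⟨∑ i ∈ range (2 * m), (-1) ^ i * a i, ?_, ?_⟩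
  · rw [← prod_ω_pow_even_eq_prod_odd_iff]
    have h_even : ∀ i ∈ range m, X (2 * (i : ℤ)) = ω ^ (a (2 * i)).val := fun i hi => by
      rw [← ha (2 * i) (by simp at hi; omega)]; push_cast; rfl
    have h_odd : ∀ i ∈ range m, X (2 * (i : ℤ) + 1) = ω ^ (a (2 * i + 1)).val := fun i hi => by
      rw [← ha (2 * i + 1) (by simp at hi; omega)]; push_cast; rfl
    rw [prod_congr rfl h_even, prod_congr rfl h_odd]
  · obtain ⟨t, ht, htd⟩ := exists_mul_conj_sum_ω_pow_eq_three_mul (range (2 * m))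
      (fun i => (-1) ^ i) a (by simp)
    have hS : seqEval (2 * m) X (-1) = ∑ i ∈ range (2 * m), (((-1) ^ i : ℤ) : ℂ) * ω ^ (a i).val :=
      sum_congr rfl fun i hi => by rw [ha i (mem_range.1 hi)]; push_cast; ring
    refine ⟨t, hS ▸ ht, ?_⟩
    rw [htd]
    push_cast
    rfl

end IsThreePhaseSeq

lemma PeriodicGolaySeqTriad.sum_seqEval_mul_conj {s : ℕ} {A B C : ℤ → ℂ}
    (h : PeriodicGolaySeqTriad s A B C) (hs : 0 < s) {ζ : ℂ} (hζ : ζ ^ s = 1) :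
    seqEval s A (conj ζ) * conj (seqEval s A (conj ζ)) +
      seqEval s B (conj ζ) * conj (seqEval s B (conj ζ)) +
      seqEval s C (conj ζ) * conj (seqEval s C (conj ζ)) = 3 * s := by
  obtain ⟨hA, hB, hC, hR⟩ := h
  rw [← sum_pow_mul_perCorr hζ, ← sum_pow_mul_perCorr hζ, ← sum_pow_mul_perCorr hζ,
    ← sum_add_distrib, ← sum_add_distrib, sum_eq_single_of_mem 0 (mem_range.2 hs)]
  · simp only [pow_zero, one_mul, Nat.cast_zero, hA.perCorr_zero, hB.perCorr_zero, hC.perCorr_zero]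
    ring
  · intro u hu hu0
    rw [← mul_add, ← mul_add, hR u (by omega) (by simpa using hu), mul_zero]

lemma ZMod.exactly_one_ne_zero_of_sq_add_sq_add_sq_eq_one (x y z : ZMod 3)
    (h : x ^ 2 + y ^ 2 + z ^ 2 = 1) :
    (x = 0 ∧ y = 0 ∧ z ≠ 0) ∨ (x = 0 ∧ y ≠ 0 ∧ z = 0) ∨ (x ≠ 0 ∧ y = 0 ∧ z = 0) := by
  revert x y z; decide

theorem periodic_golay_triad_exactly_two_of_three_general (m : ℕ)
    (hmod : m % 3 = 2) (A B C : ℤ → ℂ)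
    (h : PeriodicGolaySeqTriad (2 * m) A B C) :
    ((∏ i ∈ Finset.range m, A (2 * (i : ℤ)) = ∏ i ∈ Finset.range m, A (2 * (i : ℤ) + 1)) ∧
     (∏ i ∈ Finset.range m, B (2 * (i : ℤ)) = ∏ i ∈ Finset.range m, B (2 * (i : ℤ) + 1)) ∧
     ¬ (∏ i ∈ Finset.range m, C (2 * (i : ℤ)) = ∏ i ∈ Finset.range m, C (2 * (i : ℤ) + 1))) ∨
    ((∏ i ∈ Finset.range m, A (2 * (i : ℤ)) = ∏ i ∈ Finset.range m, A (2 * (i : ℤ) + 1)) ∧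
     ¬ (∏ i ∈ Finset.range m, B (2 * (i : ℤ)) = ∏ i ∈ Finset.range m, B (2 * (i : ℤ) + 1)) ∧
     (∏ i ∈ Finset.range m, C (2 * (i : ℤ)) = ∏ i ∈ Finset.range m, C (2 * (i : ℤ) + 1))) ∨
    (¬ (∏ i ∈ Finset.range m, A (2 * (i : ℤ)) = ∏ i ∈ Finset.range m, A (2 * (i : ℤ) + 1)) ∧
     (∏ i ∈ Finset.range m, B (2 * (i : ℤ)) = ∏ i ∈ Finset.range m, B (2 * (i : ℤ) + 1)) ∧
     (∏ i ∈ Finset.range m, C (2 * (i : ℤ)) = ∏ i ∈ Finset.range m, C (2 * (i : ℤ) + 1))) := by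
  obtain ⟨dA, hdA, tA, htA, htdA⟩ := h.1.exists_seqEval_neg_one_mul_conj
  obtain ⟨dB, hdB, tB, htB, htdB⟩ := h.2.1.exists_seqEval_neg_one_mul_conj
  obtain ⟨dC, hdC, tC, htC, htdC⟩ := h.2.2.1.exists_seqEval_neg_one_mul_conj
  have hsum := h.sum_seqEval_mul_conj (by omega) (ζ := -1) (by simp [pow_mul])
  rw [map_neg, map_one, htA, htB, htC] at hsum
  push_cast at hsum
  have ht : tA + tB + tC = 2 * m := by
    exact_mod_cast (by linear_combination hsum / 3 : (tA + tB + tC : ℂ) = 2 * m)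
  have hm3 : (m : ZMod 3) = 2 := by rw [← ZMod.natCast_mod, hmod]; rfl
  have hd : dA ^ 2 + dB ^ 2 + dC ^ 2 = 1 := by
    have := congrArg (Int.cast : ℤ → ZMod 3) ht
    push_cast [htdA, htdB, htdC, hm3] at this
    rw [this]; rfl
  simp only [hdA, hdB, hdC]
  exact ZMod.exactly_one_ne_zero_of_sq_add_sq_add_sq_eq_one dA dB dC hd

/-- If `A, B, C` form a 3-phase length-`2m` periodic Golay sequence triad with
`m ≡ 2 (mod 3)`, then exactly two of the three equations
`∏ A(2i) = ∏ A(2i+1)`, `∏ B(2i) = ∏ B(2i+1)`, `∏ C(2i) = ∏ C(2i+1)` hold. -/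
theorem periodic_golay_triad_exactly_two_of_three (m : ℕ) (hm : 0 < m)
    (hmod : m % 3 = 2) (A B C : ℤ → ℂ)
    (h : PeriodicGolaySeqTriad (2 * m) A B C) :
    ((∏ i ∈ Finset.range m, A (2 * (i : ℤ)) = ∏ i ∈ Finset.range m, A (2 * (i : ℤ) + 1)) ∧
     (∏ i ∈ Finset.range m, B (2 * (i : ℤ)) = ∏ i ∈ Finset.range m, B (2 * (i : ℤ) + 1)) ∧
     ¬ (∏ i ∈ Finset.range m, C (2 * (i : ℤ)) = ∏ i ∈ Finset.range m, C (2 * (i : ℤ) + 1))) ∨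
    ((∏ i ∈ Finset.range m, A (2 * (i : ℤ)) = ∏ i ∈ Finset.range m, A (2 * (i : ℤ) + 1)) ∧
     ¬ (∏ i ∈ Finset.range m, B (2 * (i : ℤ)) = ∏ i ∈ Finset.range m, B (2 * (i : ℤ) + 1)) ∧
     (∏ i ∈ Finset.range m, C (2 * (i : ℤ)) = ∏ i ∈ Finset.range m, C (2 * (i : ℤ) + 1))) ∨
    (¬ (∏ i ∈ Finset.range m, A (2 * (i : ℤ)) = ∏ i ∈ Finset.range m, A (2 * (i : ℤ) + 1)) ∧
     (∏ i ∈ Finset.range m, B (2 * (i : ℤ)) = ∏ i ∈ Finset.range m, B (2 * (i : ℤ) + 1)) ∧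
     (∏ i ∈ Finset.range m, C (2 * (i : ℤ)) = ∏ i ∈ Finset.range m, C (2 * (i : ℤ) + 1))) :=
  periodic_golay_triad_exactly_two_of_three_general m hmod A B C h
end

section
/- (Linear Offsets for array triads.) Suppose that (a_{i₁,…,i_r}), (b_{i₁,…,i_r}), (c_{i₁,…,i_r}) form an s₁ × ⋯ × s_r Golay array triad over ℤ₃, and let e₁, …, e_r ∈ ℤ₃. Then the arrays (a_{i₁,…,i_r} + e₁i₁ + ⋯ + e_r i_r), (b_{i₁,…,i_r} + e₁i₁ + ⋯ + e_r i_r), (c_{i₁,…,i_r} + e₁i₁ + ⋯ + e_r i_r) over ℤ₃ also form an s₁ × ⋯ × s_r Golay array triad over ℤ₃. -/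
open scoped BigOperators

/-- Aperiodic autocorrelation function of an `r`-dimensional array:
`C_A(u) = Σ_{i ∈ ℤ^r} A(i) conj(A(i+u))`. -/
noncomputable def aperCorrArr {r : ℕ} (A : (Fin r → ℤ) → ℂ) (u : Fin r → ℤ) : ℂ :=
  ∑' i : Fin r → ℤ, A i * (starRingEnd ℂ) (A (i + u))

/-- The 3-phase `s₁ × ⋯ × s_r` array corresponding to an array over `ℤ₃`:
`A(i) = ω^{a(i)}` when `0 ≤ i_k < s_k` for all `k`, and `0` otherwise. -/
noncomputable def toArr (r : ℕ) (s : Fin r → ℕ) (a : (Fin r → ℤ) → ZMod 3) :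
    (Fin r → ℤ) → ℂ :=
  fun i => if ∀ k, 0 ≤ i k ∧ i k < (s k : ℤ) then ω ^ (a i).val else 0

/-- Three `s₁ × ⋯ × s_r` arrays over `ℤ₃` forming a Golay array triad over
`ℤ₃`: their corresponding 3-phase arrays satisfy
`C_A(u) + C_B(u) + C_C(u) = 0` for all `u ≠ 0`. -/
def GolayArrTriadZ3 (r : ℕ) (s : Fin r → ℕ) (a b c : (Fin r → ℤ) → ZMod 3) : Prop :=
  ∀ u : Fin r → ℤ, u ≠ 0 →
    aperCorrArr (toArr r s a) u + aperCorrArr (toArr r s b) u +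
      aperCorrArr (toArr r s c) u = 0

/-!
Adding a linear form `ℓ` to an array over `ℤ₃` multiplies its 3-phase array pointwise by
`i ↦ ω ^ ℓ(i)`, a character of `ℤ^r` with values on the unit circle. For such a character `ψ`,
`ψ(i) conj(ψ(i + u)) = conj(ψ(u))` does not depend on `i`, so every aperiodic autocorrelation at
shift `u` is multiplied by the same factor `conj(ψ(u))`, and the triad condition survives.
-/

open ComplexConjugate

lemma ω_pow_val (j : ZMod 3) : ω ^ j.val = ZMod.toCircle j := by
  rw [ZMod.toCircle_apply, ω, ← Complex.exp_nat_mul]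
  push_cast
  ring_nf

lemma toArr_eq_toCircle (r : ℕ) (s : Fin r → ℕ) (a : (Fin r → ℤ) → ZMod 3) (i : Fin r → ℤ) :
    toArr r s a i =
      if ∀ k, 0 ≤ i k ∧ i k < (s k : ℤ) then (ZMod.toCircle (a i) : ℂ) else 0 := by
  rw [toArr, ω_pow_val]

lemma toArr_add (r : ℕ) (s : Fin r → ℕ) (a g : (Fin r → ℤ) → ZMod 3) (i : Fin r → ℤ) :
    toArr r s (fun j => a j + g j) i = ZMod.toCircle (g i) * toArr r s a i := by
  simp only [toArr_eq_toCircle, AddChar.map_add_eq_mul, Circle.coe_mul]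
  split_ifs <;> ring

lemma aperCorrArr_circle_mul {r : ℕ} (ψ : AddChar (Fin r → ℤ) Circle) (A : (Fin r → ℤ) → ℂ)
    (u : Fin r → ℤ) :
    aperCorrArr (fun i => (ψ i : ℂ) * A i) u = conj (ψ u : ℂ) * aperCorrArr A u := by
  rw [aperCorrArr, aperCorrArr, ← tsum_mul_left]
  refine tsum_congr fun i => ?_
  have hψi : (ψ i : ℂ) * conj (ψ i : ℂ) = 1 := by
    rw [Complex.mul_conj, Circle.normSq_coe, Complex.ofReal_one]
  rw [AddChar.map_add_eq_mul, Circle.coe_mul, map_mul, map_mul]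
  linear_combination conj (ψ u : ℂ) * A i * conj (A (i + u)) * hψi

theorem GolayArrTriadZ3.add_addMonoidHom {r : ℕ} {s : Fin r → ℕ}
    {a b c : (Fin r → ℤ) → ZMod 3} (h : GolayArrTriadZ3 r s a b c) (L : (Fin r → ℤ) →+ ZMod 3) :
    GolayArrTriadZ3 r s (fun i => a i + L i) (fun i => b i + L i) (fun i => c i + L i) := by
  intro u hu
  let ψ : AddChar (Fin r → ℤ) Circle := ZMod.toCircle.compAddMonoidHom L
  have hcorr (f : (Fin r → ℤ) → ZMod 3) :
      aperCorrArr (toArr r s fun i => f i + L i) u =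
        conj (ψ u : ℂ) * aperCorrArr (toArr r s f) u := by
    rw [← aperCorrArr_circle_mul]
    exact congrArg (aperCorrArr · u) (funext (toArr_add r s f L))
  rw [hcorr, hcorr, hcorr, ← mul_add, ← mul_add, h u hu, mul_zero]

/-- (Linear Offsets.) If `a, b, c` form an `s₁ × ⋯ × s_r` Golay array triad
over `ℤ₃`, then so do the arrays obtained by adding `e₁i₁ + ⋯ + e_r i_r`. -/
theorem golay_array_triad_linear_offset (r : ℕ) (s : Fin r → ℕ)
    (a b c : (Fin r → ℤ) → ZMod 3) (h : GolayArrTriadZ3 r s a b c)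
    (e : Fin r → ZMod 3) :
    GolayArrTriadZ3 r s
      (fun i => a i + ∑ k, e k * ((i k : ZMod 3)))
      (fun i => b i + ∑ k, e k * ((i k : ZMod 3)))
      (fun i => c i + ∑ k, e k * ((i k : ZMod 3))) :=
  h.add_addMonoidHom <| AddMonoidHom.mk' (fun i => ∑ k, e k * ((i k : ZMod 3))) fun i j => by
    simp only [Pi.add_apply, Int.cast_add, mul_add, Finset.sum_add_distrib]
end

section
/- (Projection mapping.) Suppose that A, B, C form a 3-phase s₁ × ⋯ × s_r Golay array triad, where r ≥ 2. Then ψ_{1,2}(A), ψ_{1,2}(B), ψ_{1,2}(C) form a 3-phase s₁s₂ × s₃ × ⋯ × s_r Golay array triad. -/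
open scoped BigOperators

/-- An `s₁ × s₂ × s₃ × ⋯ × s_{r+2}` array (with the first two dimensions
displayed explicitly): vanishes whenever some index is out of range. -/
def IsArr2R (s₁ s₂ : ℕ) {r : ℕ} (s : Fin r → ℕ)
    (A : ℤ → ℤ → (Fin r → ℤ) → ℂ) : Prop :=
  ∀ (i₁ i₂ : ℤ) (i : Fin r → ℤ),
    ((i₁ < 0 ∨ (s₁ : ℤ) ≤ i₁) ∨ (i₂ < 0 ∨ (s₂ : ℤ) ≤ i₂) ∨
      ∃ k, i k < 0 ∨ (s k : ℤ) ≤ i k) → A i₁ i₂ i = 0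

/-- A 3-phase `s₁ × s₂ × s₃ × ⋯ × s_{r+2}` array: entries inside the index
range lie in `{1, ω, ω²}`. -/
def IsThreePhase2R (s₁ s₂ : ℕ) {r : ℕ} (s : Fin r → ℕ)
    (A : ℤ → ℤ → (Fin r → ℤ) → ℂ) : Prop :=
  IsArr2R s₁ s₂ s A ∧
    ∀ (i₁ i₂ : ℤ) (i : Fin r → ℤ), 0 ≤ i₁ → i₁ < (s₁ : ℤ) → 0 ≤ i₂ →
      i₂ < (s₂ : ℤ) → (∀ k, 0 ≤ i k ∧ i k < (s k : ℤ)) →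
      A i₁ i₂ i ∈ ({1, ω, ω ^ 2} : Set ℂ)

/-- Aperiodic autocorrelation of an array with two explicit leading
dimensions. -/
noncomputable def aperCorr2R {r : ℕ} (A : ℤ → ℤ → (Fin r → ℤ) → ℂ)
    (u₁ u₂ : ℤ) (u : Fin r → ℤ) : ℂ :=
  ∑' p : ℤ × ℤ × (Fin r → ℤ),
    A p.1 p.2.1 p.2.2 * (starRingEnd ℂ) (A (p.1 + u₁) (p.2.1 + u₂) (p.2.2 + u))

/-- A `t × s₁ × ⋯ × s_r` array (with the first dimension displayed
explicitly): vanishes whenever some index is out of range. -/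
def IsArr1R (t : ℕ) {r : ℕ} (s : Fin r → ℕ) (B : ℤ → (Fin r → ℤ) → ℂ) : Prop :=
  ∀ (i₀ : ℤ) (i : Fin r → ℤ),
    ((i₀ < 0 ∨ (t : ℤ) ≤ i₀) ∨ ∃ k, i k < 0 ∨ (s k : ℤ) ≤ i k) → B i₀ i = 0

/-- A 3-phase `t × s₁ × ⋯ × s_r` array. -/
def IsThreePhase1R (t : ℕ) {r : ℕ} (s : Fin r → ℕ)
    (B : ℤ → (Fin r → ℤ) → ℂ) : Prop :=
  IsArr1R t s B ∧
    ∀ (i₀ : ℤ) (i : Fin r → ℤ), 0 ≤ i₀ → i₀ < (t : ℤ) →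
      (∀ k, 0 ≤ i k ∧ i k < (s k : ℤ)) → B i₀ i ∈ ({1, ω, ω ^ 2} : Set ℂ)

/-- Aperiodic autocorrelation of an array with one explicit leading
dimension. -/
noncomputable def aperCorr1R {r : ℕ} (B : ℤ → (Fin r → ℤ) → ℂ)
    (u₀ : ℤ) (u : Fin r → ℤ) : ℂ :=
  ∑' p : ℤ × (Fin r → ℤ),
    B p.1 p.2 * (starRingEnd ℂ) (B (p.1 + u₀) (p.2 + u))

/-- Three 3-phase arrays (two explicit leading dimensions) forming a 3-phase
Golay array triad. -/
def GolayTriad2R (s₁ s₂ : ℕ) {r : ℕ} (s : Fin r → ℕ)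
    (A B C : ℤ → ℤ → (Fin r → ℤ) → ℂ) : Prop :=
  IsThreePhase2R s₁ s₂ s A ∧ IsThreePhase2R s₁ s₂ s B ∧ IsThreePhase2R s₁ s₂ s C ∧
    ∀ (u₁ u₂ : ℤ) (u : Fin r → ℤ), ¬ (u₁ = 0 ∧ u₂ = 0 ∧ u = 0) →
      aperCorr2R A u₁ u₂ u + aperCorr2R B u₁ u₂ u + aperCorr2R C u₁ u₂ u = 0

/-- Three 3-phase arrays (one explicit leading dimension) forming a 3-phase
Golay array triad. -/
def GolayTriad1R (t : ℕ) {r : ℕ} (s : Fin r → ℕ)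
    (A B C : ℤ → (Fin r → ℤ) → ℂ) : Prop :=
  IsThreePhase1R t s A ∧ IsThreePhase1R t s B ∧ IsThreePhase1R t s C ∧
    ∀ (u₀ : ℤ) (u : Fin r → ℤ), ¬ (u₀ = 0 ∧ u = 0) →
      aperCorr1R A u₀ u + aperCorr1R B u₀ u + aperCorr1R C u₀ u = 0

/-- The projection `ψ_{1,2}`: joins the first dimension (of size `s₁`) to the
second, via `B(i₁ + s₁ i₂, i) = A(i₁, i₂, i)` for `0 ≤ i₁ < s₁`,
`0 ≤ i₂ < s₂`, and zero outside the index ranges. -/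
noncomputable def proj12 (s₁ s₂ : ℕ) {r : ℕ}
    (A : ℤ → ℤ → (Fin r → ℤ) → ℂ) : ℤ → (Fin r → ℤ) → ℂ :=
  fun j i =>
    if 0 ≤ j ∧ j < (s₁ : ℤ) * (s₂ : ℤ) then A (j % (s₁ : ℤ)) (j / (s₁ : ℤ)) i
    else 0

/-!
Write `u₀ = a + s₁ b` with `0 ≤ a < s₁`. Under `ψ_{1,2}` the entry at `(i₁, i₂)` sits at
`j = i₁ + s₁ i₂`, and `j + u₀` is the entry at `(i₁ + a, i₂ + b)` when `i₁ + a < s₁` and at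
`(i₁ + a - s₁, i₂ + b + 1)` otherwise; in either case the other position is outside the array. So
`C_{ψ(X)}(u₀, u) = C_X(a, b, u) + C_X(a - s₁, b + 1, u)`, and both shifts are nonzero whenever
`(u₀, u)` is, so the triad sums of the projections vanish.
-/

variable {r : ℕ} {s₁ s₂ : ℕ} {s : Fin r → ℕ} {X : ℤ → ℤ → (Fin r → ℤ) → ℂ}

namespace IsArr2R

theorem bounds_of_ne_zero (hX : IsArr2R s₁ s₂ s X) {i₁ i₂ : ℤ} {i : Fin r → ℤ}
    (h : X i₁ i₂ i ≠ 0) :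
    (0 ≤ i₁ ∧ i₁ < s₁) ∧ (0 ≤ i₂ ∧ i₂ < s₂) ∧ ∀ k, 0 ≤ i k ∧ i k < s k := by
  have := mt (hX i₁ i₂ i) h
  push Not at this
  exact this

theorem summable_corr (hX : IsArr2R s₁ s₂ s X) (v₁ v₂ : ℤ) (v : Fin r → ℤ) :
    Summable fun p : ℤ × ℤ × (Fin r → ℤ) =>
      X p.1 p.2.1 p.2.2 * starRingEnd ℂ (X (p.1 + v₁) (p.2.1 + v₂) (p.2.2 + v)) := by
  refine summable_of_ne_finset_zero
    (s := Finset.Ico 0 (s₁ : ℤ) ×ˢ Finset.Ico 0 (s₂ : ℤ) ×ˢ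
      Fintype.piFinset fun k => Finset.Ico 0 (s k : ℤ)) fun p hp => ?_
  by_contra hne
  obtain ⟨h₁, h₂, h⟩ := hX.bounds_of_ne_zero (left_ne_zero_of_mul hne)
  simp_all [Finset.mem_product, Fintype.mem_piFinset]

theorem proj12_apply (hX : IsArr2R s₁ s₂ s X) (j : ℤ) (i : Fin r → ℤ) :
    proj12 s₁ s₂ X j i = X (j % s₁) (j / s₁) i := by
  unfold proj12
  split_ifs with hj
  · rfl
  · by_contra hne
    obtain ⟨⟨h₁, h₁'⟩, ⟨h₂, h₂'⟩, -⟩ := hX.bounds_of_ne_zero (Ne.symm hne)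
    have := Int.emod_add_mul_ediv j s₁
    exact hj ⟨by nlinarith, by nlinarith⟩

theorem proj12 (hX : IsArr2R s₁ s₂ s X) : IsArr1R (s₁ * s₂) s (proj12 s₁ s₂ X) := by
  rintro j i (hj | hk)
  · simp only [_root_.proj12]
    rw [if_neg]
    omega
  · rw [hX.proj12_apply]
    exact hX _ _ _ (Or.inr (Or.inr hk))

theorem apply_emod_ediv_eq_add (hX : IsArr2R s₁ s₂ s X) (hs₁ : 0 < s₁) {c : ℤ} (hc₀ : 0 ≤ c)
    (hc : c < 2 * s₁) (d : ℤ) (i : Fin r → ℤ) :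
    X ((c + s₁ * d) % s₁) ((c + s₁ * d) / s₁) i = X c d i + X (c - s₁) (d + 1) i := by
  have hs : (0 : ℤ) < s₁ := by exact_mod_cast hs₁
  by_cases hcs : c < s₁
  · obtain ⟨hdiv, hmod⟩ := (Int.ediv_emod_unique (a := c + s₁ * d) (r := c) (q := d) hs).2
      ⟨rfl, hc₀, hcs⟩
    rw [hdiv, hmod, hX (c - s₁) (d + 1) i (Or.inl (Or.inl (by omega))), add_zero]
  · obtain ⟨hdiv, hmod⟩ :=
      (Int.ediv_emod_unique (a := c + s₁ * d) (r := c - s₁) (q := d + 1) hs).2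
        ⟨by ring, by omega, by omega⟩
    rw [hdiv, hmod, hX c d i (Or.inl (Or.inr (by omega))), zero_add]

end IsArr2R

theorem aperCorr1R_proj12 (hX : IsArr2R s₁ s₂ s X) (hs₁ : 0 < s₁) (u₀ : ℤ) (u : Fin r → ℤ) :
    aperCorr1R (proj12 s₁ s₂ X) u₀ u =
      aperCorr2R X (u₀ % s₁) (u₀ / s₁) u + aperCorr2R X (u₀ % s₁ - s₁) (u₀ / s₁ + 1) u := by
  have hs : (0 : ℤ) < s₁ := by exact_mod_cast hs₁
  set a := u₀ % s₁
  set b := u₀ / s₁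
  let g : ℤ × (Fin r → ℤ) → ℤ × ℤ × (Fin r → ℤ) := fun p => (p.1 % s₁, p.1 / s₁, p.2)
  let f : ℤ × ℤ × (Fin r → ℤ) → ℂ := fun q =>
    X q.1 q.2.1 q.2.2 * starRingEnd ℂ (X (q.1 + a) (q.2.1 + b) (q.2.2 + u)) +
      X q.1 q.2.1 q.2.2 * starRingEnd ℂ (X (q.1 + (a - s₁)) (q.2.1 + (b + 1)) (q.2.2 + u))
  have hg : Function.Injective g := by
    rintro ⟨j, i⟩ ⟨j', i'⟩ h
    simp only [g, Prod.mk.injEq] at h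
    rw [← Int.emod_add_mul_ediv j s₁, ← Int.emod_add_mul_ediv j' s₁, h.1, h.2.1, h.2.2]
  have hf : Function.support f ⊆ Set.range g := by
    rintro ⟨i₁, i₂, i⟩ hq
    have hne : X i₁ i₂ i ≠ 0 := fun h0 => hq (by simp [f, h0])
    obtain ⟨⟨h₁, h₁'⟩, -⟩ := hX.bounds_of_ne_zero hne
    obtain ⟨hdiv, hmod⟩ := (Int.ediv_emod_unique (a := i₁ + s₁ * i₂) hs).2 ⟨rfl, h₁, h₁'⟩
    exact ⟨(i₁ + s₁ * i₂, i), by simp [g, hdiv, hmod]⟩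
  have hfg : ∀ p, proj12 s₁ s₂ X p.1 p.2 * starRingEnd ℂ (proj12 s₁ s₂ X (p.1 + u₀) (p.2 + u))
      = f (g p) := by
    rintro ⟨j, i⟩
    have hsplit : j + u₀ = (j % s₁ + a) + s₁ * (j / s₁ + b) := by
      linarith [Int.emod_add_mul_ediv j s₁, Int.emod_add_mul_ediv u₀ s₁]
    have hcarry := hX.apply_emod_ediv_eq_add hs₁
      (by linarith [Int.emod_nonneg j hs.ne', Int.emod_nonneg u₀ hs.ne'] : 0 ≤ j % s₁ + a)
      (by linarith [Int.emod_lt_of_pos j hs, Int.emod_lt_of_pos u₀ hs]) (j / s₁ + b) (i + u)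
    simp only [hX.proj12_apply, hsplit, hcarry, f, g, map_add]
    ring_nf
  calc aperCorr1R (proj12 s₁ s₂ X) u₀ u = ∑' p, f (g p) := tsum_congr hfg
    _ = ∑' q, f q := hg.tsum_eq hf
    _ = _ := (hX.summable_corr a b u).tsum_add (hX.summable_corr (a - s₁) (b + 1) u)

theorem IsThreePhase2R.proj12 (hX : IsThreePhase2R s₁ s₂ s X) :
    IsThreePhase1R (s₁ * s₂) s (proj12 s₁ s₂ X) := by
  refine ⟨hX.1.proj12, fun j i hj₀ hj hi => ?_⟩
  push_cast at hj
  have hs : (0 : ℤ) < s₁ := by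
    by_contra! h
    nlinarith [(Nat.cast_nonneg s₂ : (0 : ℤ) ≤ s₂)]
  rw [hX.1.proj12_apply]
  exact hX.2 _ _ _ (Int.emod_nonneg j hs.ne') (Int.emod_lt_of_pos j hs) (Int.ediv_nonneg hj₀ hs.le)
    ((Int.ediv_lt_iff_lt_mul hs).2 (by linarith)) hi

/-- (Projection mapping.) If `A, B, C` form a 3-phase `s₁ × s₂ × s₃ × ⋯ × s_{r+2}`
Golay array triad, then `ψ₁,₂(A), ψ₁,₂(B), ψ₁,₂(C)` form a 3-phase
`s₁s₂ × s₃ × ⋯ × s_{r+2}` Golay array triad. -/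
theorem proj12_golay_triad (s₁ s₂ : ℕ) (r : ℕ) (s : Fin r → ℕ)
    (A B C : ℤ → ℤ → (Fin r → ℤ) → ℂ) (h : GolayTriad2R s₁ s₂ s A B C) :
    GolayTriad1R (s₁ * s₂) s (proj12 s₁ s₂ A) (proj12 s₁ s₂ B) (proj12 s₁ s₂ C) := by
  obtain ⟨hA, hB, hC, hcorr⟩ := h
  refine ⟨hA.proj12, hB.proj12, hC.proj12, fun u₀ u hu => ?_⟩
  rcases Nat.eq_zero_or_pos s₁ with rfl | hs₁
  · have hψ (X : ℤ → ℤ → (Fin r → ℤ) → ℂ) : proj12 0 s₂ X = fun _ _ => 0 := by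
      ext j i
      exact if_neg fun hj => by omega
    simp [aperCorr1R, hψ]
  have hs : (0 : ℤ) < s₁ := by exact_mod_cast hs₁
  rw [aperCorr1R_proj12 hA.1 hs₁, aperCorr1R_proj12 hB.1 hs₁, aperCorr1R_proj12 hC.1 hs₁]
  have h₁ := hcorr (u₀ % s₁) (u₀ / s₁) u fun ⟨ha, hb, hu'⟩ =>
    hu ⟨by rw [← Int.emod_add_mul_ediv u₀ s₁, ha, hb, mul_zero, add_zero], hu'⟩
  have h₂ := hcorr (u₀ % s₁ - s₁) (u₀ / s₁ + 1) u fun ⟨ha, _⟩ => by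
    linarith [Int.emod_lt_of_pos u₀ hs]
  linear_combination h₁ + h₂
end

section
/- (Cross-correlation, 3 × s case.) Suppose that for each j ∈ {1,2,3}, the sequences A_j, B_j, C_j form a 3-phase length s Golay sequence triad, that for all integers u, C_{A₁,A₃}(u) + C_{B₁,B₃}(u) + C_{C₁,C₃}(u) = 0, and that for all integers u, C_{A₁,A₂}(u) + C_{A₂,A₃}(u) + C_{B₁,B₂}(u) + C_{B₂,B₃}(u) + C_{C₁,C₂}(u) + C_{C₂,C₃}(u) = 0. Define the 3 × s arrays U, V, W by U(j−1, i) = A_j(i), V(j−1, i) = B_j(i), W(j−1, i) = C_j(i) for j ∈ {1,2,3} (with value 0 when the row index is not in {0,1,2}). Then U, V, W form a 3-phase 3 × s Golay array triad. -/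
open scoped BigOperators

/-- Aperiodic cross-correlation function
`C_{A,B}(u) = Σ_{i ∈ ℤ} A(i) conj(B(i+u))`. -/
noncomputable def crossCorr (A B : ℤ → ℂ) (u : ℤ) : ℂ :=
  ∑' i : ℤ, A i * (starRingEnd ℂ) (B (i + u))

/-- A 3-phase `s₁ × s₂` array: vanishes outside
`{0,…,s₁−1} × {0,…,s₂−1}` and takes values in `{1, ω, ω²}` on this index
set. -/
def IsThreePhaseArr2 (s₁ s₂ : ℕ) (D : ℤ → ℤ → ℂ) : Prop :=
  (∀ i₁ i₂ : ℤ, (i₁ < 0 ∨ (s₁ : ℤ) ≤ i₁) ∨ (i₂ < 0 ∨ (s₂ : ℤ) ≤ i₂) → D i₁ i₂ = 0) ∧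
    ∀ i₁ i₂ : ℤ, 0 ≤ i₁ → i₁ < (s₁ : ℤ) → 0 ≤ i₂ → i₂ < (s₂ : ℤ) →
      D i₁ i₂ ∈ ({1, ω, ω ^ 2} : Set ℂ)

/-- Aperiodic autocorrelation of a two-dimensional array. -/
noncomputable def aperCorr2 (D : ℤ → ℤ → ℂ) (u₁ u₂ : ℤ) : ℂ :=
  ∑' p : ℤ × ℤ, D p.1 p.2 * (starRingEnd ℂ) (D (p.1 + u₁) (p.2 + u₂))

/-- Three 3-phase `s₁ × s₂` arrays forming a 3-phase Golay array triad. -/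
def GolayArrTriad2 (s₁ s₂ : ℕ) (U V W : ℤ → ℤ → ℂ) : Prop :=
  IsThreePhaseArr2 s₁ s₂ U ∧ IsThreePhaseArr2 s₁ s₂ V ∧ IsThreePhaseArr2 s₁ s₂ W ∧
    ∀ u₁ u₂ : ℤ, ¬ (u₁ = 0 ∧ u₂ = 0) →
      aperCorr2 U u₁ u₂ + aperCorr2 V u₁ u₂ + aperCorr2 W u₁ u₂ = 0

/-- The `2 × s` array with rows `X` and `Y` (zero off rows `0` and `1`). -/
def rows2 (X Y : ℤ → ℂ) : ℤ → ℤ → ℂ :=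
  fun i₁ i => if i₁ = 0 then X i else if i₁ = 1 then Y i else 0

/-- The `3 × s` array with rows `X`, `Y`, `Z` (zero off rows `0`, `1`, `2`). -/
def rows3 (X Y Z : ℤ → ℂ) : ℤ → ℤ → ℂ :=
  fun i₁ i => if i₁ = 0 then X i else if i₁ = 1 then Y i else if i₁ = 2 then Z i else 0

/- Reading a `3 × s` array row by row, its autocorrelation at vertical shift `u₁`
is the sum of the cross-correlations of row `j` with row `j + u₁`. For `u₁ = 0, 1, 2` the
three hypotheses are exactly the vanishing of these sums over the three arrays; for `u₁ ≥ 3`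
no rows overlap; and negative shifts follow from `C_D(-u) = conj (C_D(u))`. -/

lemma crossCorr_zero_right (X : ℤ → ℂ) (u : ℤ) : crossCorr X 0 u = 0 := by
  simp [crossCorr]

lemma aperCorr2_eq_conj_neg (D : ℤ → ℤ → ℂ) (u₁ u₂ : ℤ) :
    aperCorr2 D u₁ u₂ = starRingEnd ℂ (aperCorr2 D (-u₁) (-u₂)) := by
  rw [aperCorr2, aperCorr2, Complex.conj_tsum, ← (Equiv.addRight ((u₁, u₂) : ℤ × ℤ)).tsum_eq
    (fun p => starRingEnd ℂ (D p.1 p.2 * starRingEnd ℂ (D (p.1 + -u₁) (p.2 + -u₂))))]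
  congr 1
  ext p
  simp [mul_comm]

lemma aperCorr2_eq_sum_crossCorr {s₁ s₂ : ℕ} {D : ℤ → ℤ → ℂ}
    (hD : ∀ i₁ i₂ : ℤ, (i₁ < 0 ∨ (s₁ : ℤ) ≤ i₁) ∨ (i₂ < 0 ∨ (s₂ : ℤ) ≤ i₂) → D i₁ i₂ = 0)
    (u₁ u₂ : ℤ) :
    aperCorr2 D u₁ u₂ = ∑ j ∈ Finset.Ico (0 : ℤ) s₁, crossCorr (D j) (D (j + u₁)) u₂ := by
  rw [aperCorr2, tsum_eq_sum (s := Finset.Ico (0 : ℤ) s₁ ×ˢ Finset.Ico (0 : ℤ) s₂),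
    Finset.sum_product]
  · refine Finset.sum_congr rfl fun j hj => (tsum_eq_sum fun i hi => ?_).symm
    simp only [Finset.mem_Ico] at hj hi
    simp [hD j i (by omega)]
  · intro p hp
    simp only [Finset.mem_product, Finset.mem_Ico] at hp
    simp [hD p.1 p.2 (by omega)]

lemma add_aperCorr2_eq_zero_of_neg {U V W : ℤ → ℤ → ℂ} {u₁ u₂ : ℤ}
    (h : aperCorr2 U (-u₁) (-u₂) + aperCorr2 V (-u₁) (-u₂) + aperCorr2 W (-u₁) (-u₂) = 0) :
    aperCorr2 U u₁ u₂ + aperCorr2 V u₁ u₂ + aperCorr2 W u₁ u₂ = 0 := by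
  rw [aperCorr2_eq_conj_neg U, aperCorr2_eq_conj_neg V, aperCorr2_eq_conj_neg W, ← map_add,
    ← map_add, h, map_zero]

section rows3

variable {s : ℕ} {X Y Z : ℤ → ℂ}

@[simp] lemma rows3_zero (X Y Z : ℤ → ℂ) : rows3 X Y Z 0 = X := by funext i; simp [rows3]
@[simp] lemma rows3_one (X Y Z : ℤ → ℂ) : rows3 X Y Z 1 = Y := by funext i; simp [rows3]
@[simp] lemma rows3_two (X Y Z : ℤ → ℂ) : rows3 X Y Z 2 = Z := by funext i; simp [rows3]

lemma rows3_eq_zero (X Y Z : ℤ → ℂ) {j : ℤ} (hj : j < 0 ∨ 3 ≤ j) :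
    rows3 X Y Z j = 0 := by
  funext i
  simp only [rows3, Pi.zero_apply]
  rw [if_neg (by omega), if_neg (by omega), if_neg (by omega)]

lemma rows3_apply_eq_zero_of_outside (hX : IsLenSeq s X) (hY : IsLenSeq s Y) (hZ : IsLenSeq s Z)
    (i₁ i₂ : ℤ) (h : (i₁ < 0 ∨ (3 : ℤ) ≤ i₁) ∨ (i₂ < 0 ∨ (s : ℤ) ≤ i₂)) :
    rows3 X Y Z i₁ i₂ = 0 := by
  rcases h with h | h
  · rw [rows3_eq_zero X Y Z h, Pi.zero_apply]
  · simp only [rows3]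
    split_ifs <;> simp [hX i₂ h, hY i₂ h, hZ i₂ h]

lemma isThreePhaseArr2_rows3 (hX : IsThreePhaseSeq s X) (hY : IsThreePhaseSeq s Y)
    (hZ : IsThreePhaseSeq s Z) : IsThreePhaseArr2 3 s (rows3 X Y Z) := by
  refine ⟨fun i₁ i₂ h => rows3_apply_eq_zero_of_outside hX.1 hY.1 hZ.1 i₁ i₂ (by exact_mod_cast h),
    fun i₁ i₂ hi₁ hi₁' hi₂ hi₂' => ?_⟩
  obtain rfl | rfl | rfl : i₁ = 0 ∨ i₁ = 1 ∨ i₁ = 2 := by omega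
  · simpa using hX.2 i₂ hi₂ hi₂'
  · simpa using hY.2 i₂ hi₂ hi₂'
  · simpa using hZ.2 i₂ hi₂ hi₂'

variable (hX : IsLenSeq s X) (hY : IsLenSeq s Y) (hZ : IsLenSeq s Z)
include hX hY hZ

lemma aperCorr2_rows3 (u₁ u₂ : ℤ) :
    aperCorr2 (rows3 X Y Z) u₁ u₂ =
      crossCorr X (rows3 X Y Z u₁) u₂ + crossCorr Y (rows3 X Y Z (1 + u₁)) u₂ +
        crossCorr Z (rows3 X Y Z (2 + u₁)) u₂ := by
  rw [aperCorr2_eq_sum_crossCorr (s₁ := 3) (rows3_apply_eq_zero_of_outside hX hY hZ),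
    show Finset.Ico (0 : ℤ) (3 : ℕ) = {0, 1, 2} by decide, Finset.sum_insert (by decide),
    Finset.sum_insert (by decide), Finset.sum_singleton]
  simp only [rows3_zero, rows3_one, rows3_two, zero_add, add_assoc]

lemma aperCorr2_rows3_zero (u₂ : ℤ) :
    aperCorr2 (rows3 X Y Z) 0 u₂ = aperCorr X u₂ + aperCorr Y u₂ + aperCorr Z u₂ := by
  rw [aperCorr2_rows3 hX hY hZ]
  simp only [add_zero, rows3_zero, rows3_one, rows3_two, aperCorr, crossCorr]

lemma aperCorr2_rows3_one (u₂ : ℤ) :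
    aperCorr2 (rows3 X Y Z) 1 u₂ = crossCorr X Y u₂ + crossCorr Y Z u₂ := by
  rw [aperCorr2_rows3 hX hY hZ]
  norm_num [rows3_eq_zero X Y Z (j := 3) (by omega), crossCorr_zero_right]

lemma aperCorr2_rows3_two (u₂ : ℤ) :
    aperCorr2 (rows3 X Y Z) 2 u₂ = crossCorr X Z u₂ := by
  rw [aperCorr2_rows3 hX hY hZ]
  norm_num [rows3_eq_zero X Y Z (j := 3) (by omega),
    rows3_eq_zero X Y Z (j := 4) (by omega), crossCorr_zero_right]

lemma aperCorr2_rows3_of_three_le {u₁ : ℤ} (hu₁ : 3 ≤ u₁) (u₂ : ℤ) :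
    aperCorr2 (rows3 X Y Z) u₁ u₂ = 0 := by
  rw [aperCorr2_rows3 hX hY hZ, rows3_eq_zero X Y Z (by omega),
    rows3_eq_zero X Y Z (j := 1 + u₁) (by omega),
    rows3_eq_zero X Y Z (j := 2 + u₁) (by omega)]
  simp [crossCorr_zero_right]

end rows3

/-- (Cross-correlation, `3 × s` case.) If `A_j, B_j, C_j` (`j = 1, 2, 3`) are
3-phase length-`s` Golay sequence triads with
`C_{A₁,A₃}(u) + C_{B₁,B₃}(u) + C_{C₁,C₃}(u) = 0` and
`C_{A₁,A₂}(u) + C_{A₂,A₃}(u) + C_{B₁,B₂}(u) + C_{B₂,B₃}(u) + C_{C₁,C₂}(u) +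
C_{C₂,C₃}(u) = 0` for all `u`, then stacking them row-wise gives a 3-phase
`3 × s` Golay array triad. -/
theorem cross_correlation_three_by_s (s : ℕ)
    (A₁ B₁ C₁ A₂ B₂ C₂ A₃ B₃ C₃ : ℤ → ℂ)
    (h1 : GolaySeqTriad s A₁ B₁ C₁) (h2 : GolaySeqTriad s A₂ B₂ C₂)
    (h3 : GolaySeqTriad s A₃ B₃ C₃)
    (hcc13 : ∀ u : ℤ,
      crossCorr A₁ A₃ u + crossCorr B₁ B₃ u + crossCorr C₁ C₃ u = 0)
    (hcc123 : ∀ u : ℤ,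
      crossCorr A₁ A₂ u + crossCorr A₂ A₃ u + crossCorr B₁ B₂ u +
        crossCorr B₂ B₃ u + crossCorr C₁ C₂ u + crossCorr C₂ C₃ u = 0) :
    GolayArrTriad2 3 s (rows3 A₁ A₂ A₃) (rows3 B₁ B₂ B₃) (rows3 C₁ C₂ C₃) := by
  obtain ⟨hA₁, hB₁, hC₁, hg₁⟩ := h1
  obtain ⟨hA₂, hB₂, hC₂, hg₂⟩ := h2
  obtain ⟨hA₃, hB₃, hC₃, hg₃⟩ := h3
  refine ⟨isThreePhaseArr2_rows3 hA₁ hA₂ hA₃, isThreePhaseArr2_rows3 hB₁ hB₂ hB₃,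
    isThreePhaseArr2_rows3 hC₁ hC₂ hC₃, ?_⟩
  intro u₁ u₂ hu
  wlog hu₁ : 0 ≤ u₁ generalizing u₁ u₂
  · exact add_aperCorr2_eq_zero_of_neg (this (-u₁) (-u₂) (by omega) (by omega))
  obtain rfl | rfl | rfl | hu₁ : u₁ = 0 ∨ u₁ = 1 ∨ u₁ = 2 ∨ 3 ≤ u₁ := by omega
  · have hu₂ : u₂ ≠ 0 := fun h => hu ⟨rfl, h⟩
    rw [aperCorr2_rows3_zero hA₁.1 hA₂.1 hA₃.1, aperCorr2_rows3_zero hB₁.1 hB₂.1 hB₃.1,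
      aperCorr2_rows3_zero hC₁.1 hC₂.1 hC₃.1]
    linear_combination hg₁ u₂ hu₂ + hg₂ u₂ hu₂ + hg₃ u₂ hu₂
  · rw [aperCorr2_rows3_one hA₁.1 hA₂.1 hA₃.1, aperCorr2_rows3_one hB₁.1 hB₂.1 hB₃.1,
      aperCorr2_rows3_one hC₁.1 hC₂.1 hC₃.1]
    linear_combination hcc123 u₂
  · rw [aperCorr2_rows3_two hA₁.1 hA₂.1 hA₃.1, aperCorr2_rows3_two hB₁.1 hB₂.1 hB₃.1,
      aperCorr2_rows3_two hC₁.1 hC₂.1 hC₃.1]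
    exact hcc13 u₂
  · rw [aperCorr2_rows3_of_three_le hA₁.1 hA₂.1 hA₃.1 hu₁,
      aperCorr2_rows3_of_three_le hB₁.1 hB₂.1 hB₃.1 hu₁,
      aperCorr2_rows3_of_three_le hC₁.1 hC₂.1 hC₃.1 hu₁, add_zero, add_zero]
end
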